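/- Every ordered matroid complex is order-decomposable: if Σ is a matroid complex on a finite set I and w is any linear order on I, then (w,Σ) is order-decomposable. -/

import Mathlib

/-!
The ground set of a matroid complex only bounds its faces (`Σ|T = Σ|(T ∩ I)`), so every
restriction `Σ|T` is pure. Restrictions of a matroid complex are again matroid complexes, and so
is the link of any face `τ`: if `ρ` is a facet of `lk(τ)|T` then `ρ ∪ τ` is a facet of
`Σ|(T ∪ τ)`, so purity passes from the restrictions of `Σ` to those of the link. The contraction
`Σ/A` is such a link, and its faces avoid `A` because the greedily computed `τ` is a facet of
`Σ|A`. Hence `Σ|A` and `Σ/A` are matroid complexes on `A` and on the rest of `w`, in particular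
pure, and induction on the length of `w` concludes.
-/

namespace OrderedComplexes

variable {α : Type*} [DecidableEq α]

/-- A (downward closed) simplicial complex, as a finite set of faces. -/
def IsComplex (S : Finset (Finset α)) : Prop := ∀ σ ∈ S, ∀ τ ⊆ σ, τ ∈ S

/-- `σ` is a facet (maximal face) of the complex `S`. -/
def IsFacet (S : Finset (Finset α)) (σ : Finset α) : Prop :=
  σ ∈ S ∧ ∀ τ ∈ S, σ ⊆ τ → σ = τ

/-- A complex is pure if all of its facets have the same cardinality. -/
def IsPure (S : Finset (Finset α)) : Prop :=
  ∀ σ τ, IsFacet S σ → IsFacet S τ → σ.card = τ.card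

/-- The restriction `Σ|T = {σ ∈ Σ : σ ⊆ T}`. -/
def restrictC (S : Finset (Finset α)) (T : Finset α) : Finset (Finset α) :=
  S.filter (· ⊆ T)

/-- The link of `τ` in `Σ`: `{ρ ∈ Σ : ρ ∩ τ = ∅ and ρ ∪ τ ∈ Σ}`. -/
def linkC (S : Finset (Finset α)) (τ : Finset α) : Finset (Finset α) :=
  S.filter fun ρ => Disjoint ρ τ ∧ ρ ∪ τ ∈ S

/-- The lexicographically smallest (with respect to the linear order `w`, encoded as a
duplicate-free list) facet of the complex `S`, computed greedily along `w`. -/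
def lexMinFacet (w : List α) (S : Finset (Finset α)) : Finset α :=
  w.foldl (fun τ a => if insert a τ ∈ S then insert a τ else τ) ∅

/-- The contraction `Σ/A`: the link in `Σ` of the lexicographically smallest facet of the
restriction `Σ|A`. -/
def contractC (w : List α) (S : Finset (Finset α)) (A : Finset α) : Finset (Finset α) :=
  linkC S (lexMinFacet w (restrictC S A))

/-- An ordered complex: a linear order `w` on a finite ground set (a duplicate-free list)
together with a simplicial complex whose faces are subsets of the ground set. -/
def IsOrderedComplex (w : List α) (S : Finset (Finset α)) : Prop :=
  w.Nodup ∧ (∀ σ ∈ S, σ ⊆ w.toFinset) ∧ IsComplex S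

/-- The join of two complexes: `{σ₁ ∪ σ₂ : σ₁ ∈ Σ₁, σ₂ ∈ Σ₂}`. -/
def joinC (S₁ S₂ : Finset (Finset α)) : Finset (Finset α) :=
  (S₁ ×ˢ S₂).image fun p => p.1 ∪ p.2

/-- `w` is a shuffle of the linear orders `w₁` and `w₂`: a linear order on the union of the
two ground sets restricting to `wᵢ` on each. -/
def IsShuffle (w₁ w₂ w : List α) : Prop :=
  w.Nodup ∧ w.toFinset = w₁.toFinset ∪ w₂.toFinset ∧
    w.filter (fun a => decide (a ∈ w₁.toFinset)) = w₁ ∧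
    w.filter (fun a => decide (a ∈ w₂.toFinset)) = w₂

/-- A Hopf class: a class of pure ordered complexes closed under shuffled joins, and under
restriction and contraction by initial segments (with all such restrictions pure).
Here the initial segment of `w` of length `k` is `(w.take k).toFinset`, the order induced on
it is `w.take k`, and the order induced on its complement is `w.drop k`. -/
def IsHopfClass (Q : Set (List α × Finset (Finset α))) : Prop :=
  (∀ p ∈ Q, IsOrderedComplex p.1 p.2 ∧ IsPure p.2) ∧
  (∀ p₁ ∈ Q, ∀ p₂ ∈ Q, Disjoint p₁.1.toFinset p₂.1.toFinset →
    ∀ w, IsShuffle p₁.1 p₂.1 w → (w, joinC p₁.2 p₂.2) ∈ Q) ∧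
  (∀ p ∈ Q, ∀ k : ℕ,
    IsPure (restrictC p.2 (p.1.take k).toFinset) ∧
    (p.1.take k, restrictC p.2 (p.1.take k).toFinset) ∈ Q) ∧
  (∀ p ∈ Q, ∀ k : ℕ,
    (p.1.drop k, contractC p.1 p.2 (p.1.take k).toFinset) ∈ Q)

/-- Order-decomposability: either `Σ` has exactly one facet, or `Σ` is pure and for every
nonempty proper initial segment `A` of `w` both `Σ|A` and `Σ/A` are pure and (with their
induced orders) order-decomposable. -/
inductive OrderDecomposable : List α → Finset (Finset α) → Prop
  | unique (w : List α) (S : Finset (Finset α)) (σ : Finset α)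
      (hσ : IsFacet S σ) (huniq : ∀ τ, IsFacet S τ → τ = σ) :
      OrderDecomposable w S
  | pure (w : List α) (S : Finset (Finset α)) (hpure : IsPure S)
      (hres_pure : ∀ k : ℕ, 0 < k → k < w.length →
        IsPure (restrictC S (w.take k).toFinset))
      (hcon_pure : ∀ k : ℕ, 0 < k → k < w.length →
        IsPure (contractC w S (w.take k).toFinset))
      (hres : ∀ k : ℕ, 0 < k → k < w.length →
        OrderDecomposable (w.take k) (restrictC S (w.take k).toFinset))
      (hcon : ∀ k : ℕ, 0 < k → k < w.length →
        OrderDecomposable (w.drop k) (contractC w S (w.take k).toFinset)) :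
      OrderDecomposable w S


/-- A matroid complex on `I`: a nonempty simplicial complex on `I` all of whose
restrictions are pure. -/
def IsMatroidComplex (I : Finset α) (S : Finset (Finset α)) : Prop :=
  S.Nonempty ∧ (∀ σ ∈ S, σ ⊆ I) ∧ (∀ σ ∈ S, ∀ τ ⊆ σ, τ ∈ S) ∧
    ∀ T ⊆ I, IsPure (restrictC S T)

section Greedy

variable {S : Finset (Finset α)} {σ τ : Finset α} {a : α}

def greedyStep (S : Finset (Finset α)) (τ : Finset α) (a : α) : Finset α :=
  if insert a τ ∈ S then insert a τ else τ

lemma subset_greedyStep : τ ⊆ greedyStep S τ a := by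
  unfold greedyStep
  split
  · exact Finset.subset_insert a τ
  · exact subset_rfl

lemma greedyStep_mem (hτ : τ ∈ S) : greedyStep S τ a ∈ S := by
  unfold greedyStep
  split <;> assumption

lemma mem_greedyStep (hS : IsComplex S) (hσ : σ ∈ S) (hτσ : τ ⊆ σ) (ha : a ∈ σ) :
    a ∈ greedyStep S τ a := by
  rw [greedyStep, if_pos (hS σ hσ _ (Finset.insert_subset ha hτσ))]
  exact Finset.mem_insert_self a τ

lemma subset_foldl_greedyStep (l : List α) (τ : Finset α) :
    τ ⊆ l.foldl (greedyStep S) τ := by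
  induction l generalizing τ with
  | nil => exact subset_rfl
  | cons a l ih => exact subset_greedyStep.trans (ih _)

lemma foldl_greedyStep_mem (l : List α) (hτ : τ ∈ S) : l.foldl (greedyStep S) τ ∈ S := by
  induction l generalizing τ with
  | nil => exact hτ
  | cons a l ih => exact ih (greedyStep_mem hτ)

lemma subset_foldl_greedyStep_of_subset (hS : IsComplex S) (hσ : σ ∈ S) (l : List α)
    (τ : Finset α) (hσl : σ ⊆ τ ∪ l.toFinset) (hle : l.foldl (greedyStep S) τ ⊆ σ) :
    σ ⊆ l.foldl (greedyStep S) τ := by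
  induction l generalizing τ with
  | nil => simpa using hσl
  | cons a l ih =>
    refine ih _ (fun x hx => ?_) hle
    have hτσ : τ ⊆ σ := (subset_foldl_greedyStep (a :: l) τ).trans hle
    have hx' := hσl hx
    simp only [List.toFinset_cons, Finset.mem_union, Finset.mem_insert] at hx' ⊢
    rcases hx' with hxτ | rfl | hxl
    · exact .inl (subset_greedyStep hxτ)
    · exact .inl (mem_greedyStep hS hσ hτσ hx)
    · exact .inr hxl

lemma isFacet_lexMinFacet {w : List α} (hS : IsComplex S) (hempty : ∅ ∈ S)
    (hw : ∀ σ ∈ S, σ ⊆ w.toFinset) : IsFacet S (lexMinFacet w S) := by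
  show IsFacet S (w.foldl (greedyStep S) ∅)
  refine ⟨foldl_greedyStep_mem w hempty, fun σ hσ hle => ?_⟩
  exact subset_antisymm hle
    (subset_foldl_greedyStep_of_subset hS hσ w ∅ (by simpa using hw σ hσ) hle)

end Greedy

section Link

variable {S : Finset (Finset α)} {A T σ τ ρ : Finset α}

lemma mem_restrictC : σ ∈ restrictC S T ↔ σ ∈ S ∧ σ ⊆ T := Finset.mem_filter

lemma mem_linkC : ρ ∈ linkC S τ ↔ ρ ∈ S ∧ Disjoint ρ τ ∧ ρ ∪ τ ∈ S := Finset.mem_filter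

lemma restrictC_restrictC (S : Finset (Finset α)) (A T : Finset α) :
    restrictC (restrictC S A) T = restrictC S (A ∩ T) := by
  ext σ
  simp only [mem_restrictC, Finset.subset_inter_iff, and_assoc]

lemma restrictC_inter_of_forall_subset {I : Finset α} (hI : ∀ σ ∈ S, σ ⊆ I) (T : Finset α) :
    restrictC S (T ∩ I) = restrictC S T := by
  ext σ
  simp only [mem_restrictC, Finset.subset_inter_iff]
  exact ⟨fun h => ⟨h.1, h.2.1⟩, fun h => ⟨h.1, h.2, hI σ h.1⟩⟩

lemma restrictC_eq_self_of_forall_subset (hT : ∀ σ ∈ S, σ ⊆ T) : restrictC S T = S :=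
  Finset.filter_true_of_mem hT

lemma isFacet_restrictC_union (hS : IsComplex S)
    (hρ : IsFacet (restrictC (linkC S τ) T) ρ) : IsFacet (restrictC S (T ∪ τ)) (ρ ∪ τ) := by
  obtain ⟨hρL, hρT⟩ := mem_restrictC.mp hρ.1
  obtain ⟨-, hρτ, hρτS⟩ := mem_linkC.mp hρL
  refine ⟨mem_restrictC.mpr ⟨hρτS, Finset.union_subset_union_left hρT⟩, fun σ hσ hle => ?_⟩
  obtain ⟨hσS, hσT⟩ := mem_restrictC.mp hσ
  have hστ : σ \ τ ∪ τ = σ := Finset.sdiff_union_of_subset (Finset.subset_union_right.trans hle)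
  have hlink : σ \ τ ∈ restrictC (linkC S τ) T := by
    refine mem_restrictC.mpr ⟨mem_linkC.mpr ⟨hS σ hσS _ Finset.sdiff_subset,
      Finset.sdiff_disjoint, by rwa [hστ]⟩, sdiff_le_iff'.mpr hσT⟩
  have hρσ : ρ = σ \ τ :=
    hρ.2 _ hlink (Finset.subset_sdiff.mpr ⟨Finset.subset_union_left.trans hle, hρτ⟩)
  rw [hρσ, hστ]

lemma disjoint_of_mem_linkC_of_isFacet_restrictC (hS : IsComplex S)
    (hτ : IsFacet (restrictC S A) τ) (hρ : ρ ∈ linkC S τ) : Disjoint ρ A := by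
  obtain ⟨-, hρτ, hρτS⟩ := mem_linkC.mp hρ
  obtain ⟨-, hτA⟩ := mem_restrictC.mp hτ.1
  refine Finset.disjoint_right.mpr fun a haA haρ => Finset.disjoint_left.mp hρτ haρ ?_
  have hins : insert a τ ∈ restrictC S A := mem_restrictC.mpr
    ⟨hS _ hρτS _ (Finset.insert_subset (Finset.mem_union_left _ haρ) Finset.subset_union_right),
      Finset.insert_subset haA hτA⟩
  exact hτ.2 _ hins (Finset.subset_insert a τ) ▸ Finset.mem_insert_self a τ

end Link

namespace IsMatroidComplex

variable {I : Finset α} {S : Finset (Finset α)} {τ : Finset α}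

lemma isComplex (hS : IsMatroidComplex I S) : IsComplex S := hS.2.2.1

lemma subset_ground (hS : IsMatroidComplex I S) {σ : Finset α} (hσ : σ ∈ S) : σ ⊆ I :=
  hS.2.1 σ hσ

lemma empty_mem (hS : IsMatroidComplex I S) : ∅ ∈ S := by
  obtain ⟨σ, hσ⟩ := hS.1
  exact hS.isComplex σ hσ ∅ (Finset.empty_subset σ)

lemma isPure_restrictC (hS : IsMatroidComplex I S) (T : Finset α) : IsPure (restrictC S T) :=
  restrictC_inter_of_forall_subset (fun _ => hS.subset_ground) T ▸
    hS.2.2.2 _ Finset.inter_subset_right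

lemma isPure (hS : IsMatroidComplex I S) : IsPure S :=
  restrictC_eq_self_of_forall_subset (fun _ => hS.subset_ground) ▸ hS.isPure_restrictC I

lemma of_forall_subset {J : Finset α} (hS : IsMatroidComplex I S) (hJ : ∀ σ ∈ S, σ ⊆ J) :
    IsMatroidComplex J S :=
  ⟨hS.1, hJ, hS.isComplex, fun T _ => hS.isPure_restrictC T⟩

lemma restrict (hS : IsMatroidComplex I S) (A : Finset α) :
    IsMatroidComplex A (restrictC S A) := by
  refine ⟨⟨∅, mem_restrictC.mpr ⟨hS.empty_mem, Finset.empty_subset A⟩⟩,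
    fun σ hσ => (mem_restrictC.mp hσ).2, fun σ hσ ρ hρσ => ?_, fun T _ => ?_⟩
  · obtain ⟨hσS, hσA⟩ := mem_restrictC.mp hσ
    exact mem_restrictC.mpr ⟨hS.isComplex σ hσS ρ hρσ, hρσ.trans hσA⟩
  · rw [restrictC_restrictC]
    exact hS.isPure_restrictC _

lemma link (hS : IsMatroidComplex I S) (hτ : τ ∈ S) : IsMatroidComplex I (linkC S τ) := by
  refine ⟨⟨∅, mem_linkC.mpr ⟨hS.empty_mem, Finset.disjoint_empty_left τ, by simpa using hτ⟩⟩,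
    fun ρ hρ => hS.subset_ground (mem_linkC.mp hρ).1, fun ρ hρ ρ' hρ' => ?_,
    fun T _ ρ₁ ρ₂ h₁ h₂ => ?_⟩
  · obtain ⟨hρS, hρτ, hρτS⟩ := mem_linkC.mp hρ
    exact mem_linkC.mpr ⟨hS.isComplex ρ hρS ρ' hρ', Finset.disjoint_of_subset_left hρ' hρτ,
      hS.isComplex _ hρτS _ (Finset.union_subset_union_left hρ')⟩
  · have hcard := hS.isPure_restrictC (T ∪ τ) _ _
      (isFacet_restrictC_union hS.isComplex h₁) (isFacet_restrictC_union hS.isComplex h₂)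
    have hd₁ := (mem_linkC.mp (mem_restrictC.mp h₁.1).1).2.1
    have hd₂ := (mem_linkC.mp (mem_restrictC.mp h₂.1).1).2.1
    rw [Finset.card_union_of_disjoint hd₁, Finset.card_union_of_disjoint hd₂] at hcard
    omega

lemma contract {w : List α} (hS : IsMatroidComplex w.toFinset S) (k : ℕ) :
    IsMatroidComplex (w.drop k).toFinset (contractC w S (w.take k).toFinset) := by
  set A := (w.take k).toFinset
  have hw : w.toFinset = A ∪ (w.drop k).toFinset := by
    rw [← List.toFinset_append, List.take_append_drop]
  have hA : IsMatroidComplex A (restrictC S A) := hS.restrict A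
  have hfacet : IsFacet (restrictC S A) (lexMinFacet w (restrictC S A)) :=
    isFacet_lexMinFacet hA.isComplex hA.empty_mem fun σ hσ =>
      (hA.subset_ground hσ).trans (hw ▸ Finset.subset_union_left)
  refine (hS.link (mem_restrictC.mp hfacet.1).1).of_forall_subset fun ρ hρ a haρ => ?_
  have haA : a ∉ A := Finset.disjoint_left.mp
    (disjoint_of_mem_linkC_of_isFacet_restrictC hS.isComplex hfacet hρ) haρ
  have haw := hw ▸ hS.subset_ground (mem_linkC.mp hρ).1 haρ
  exact (Finset.mem_union.mp haw).resolve_left haA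

end IsMatroidComplex

/-- Every ordered matroid complex is order-decomposable: if `Σ` is a matroid complex on a
finite set `I` and `w` is any linear order on `I`, then `(w, Σ)` is order-decomposable. -/
theorem orderDecomposable_of_matroid (w : List α)
    (S : Finset (Finset α)) (hS : IsMatroidComplex w.toFinset S) :
    OrderDecomposable w S :=
  .pure w S hS.isPure
    (fun k _ _ => (hS.restrict _).isPure)
    (fun k _ _ => (hS.contract k).isPure)
    (fun k _ _ => orderDecomposable_of_matroid (w.take k) _ (hS.restrict _))
    (fun k _ _ => orderDecomposable_of_matroid (w.drop k) _ (hS.contract k))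
termination_by w.length
decreasing_by all_goals simp only [List.length_take, List.length_drop]; omega

end OrderedComplexes
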